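/- Bound on the gap between joint and individual surrogate objectives: |𝓛^joint_{π_old}(π_new) − 𝓛ⁱ_{π_old}(πⁱ_new)| ≤ (2M/(1−γ)) · √(Σ_{j≠i} max_s D_KL(πʲ_old(·|s) ‖ πʲ_new(·|s))), where M = max_{s,a} |A_old(s,a)|. -/

import Mathlib

/-! For each state and each action of agent `i`, the two surrogates differ by the advantage integrated
against the signed measure `∏ⱼ πʲ_new - ∏ⱼ πʲ_old` on the other agents' joint actions, hence by at most
`M` times its total variation; averaging with weights `πⁱ_new` and `ρ_old` (of total mass `1 / (1 - γ)`)
keeps that bound. The total variation is at most `2 √KL`: factor `p - q = (√p - √q)(√p + √q)` and apply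
Cauchy–Schwarz, bounding the squared Hellinger distance by KL through `log t ≥ 1 - 1/t`. Finally KL is
additive over product distributions, and each factor is at most its maximum over states. -/

/-- KL divergence of probability mass functions on a finite set, with convention 0·log 0 = 0. -/
noncomputable def klDiv {A : Type*} [Fintype A] (p q : A → ℝ) : ℝ :=
  ∑ a, if p a = 0 then 0 else p a * Real.log (p a / q a)

open Finset Real

theorem sq_sqrt_sub_sqrt_le_mul_log_div {x y : ℝ} (hx : 0 < x) (hy : 0 < y) :
    (√x - √y) ^ 2 ≤ x * log (x / y) - x + y := by
  obtain ⟨a, ha, rfl⟩ : ∃ a, 0 < a ∧ a ^ 2 = x := ⟨√x, sqrt_pos.2 hx, sq_sqrt hx.le⟩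
  obtain ⟨b, hb, rfl⟩ : ∃ b, 0 < b ∧ b ^ 2 = y := ⟨√y, sqrt_pos.2 hy, sq_sqrt hy.le⟩
  have hlog : a ^ 2 - a * b ≤ a ^ 2 * log (a / b) := by
    have h := one_sub_inv_le_log_of_pos (div_pos ha hb)
    rw [inv_div] at h
    calc a ^ 2 - a * b = a ^ 2 * (1 - b / a) := by field_simp
      _ ≤ a ^ 2 * log (a / b) := by gcongr
  rw [sqrt_sq ha.le, sqrt_sq hb.le, ← div_pow, log_pow]
  push_cast
  nlinarith [hlog]

section Divergence

variable {α : Type*} [Fintype α] {p q : α → ℝ}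

theorem sum_sq_sqrt_sub_sqrt_le_klDiv (hp0 : ∀ a, 0 ≤ p a) (hq0 : ∀ a, 0 ≤ q a)
    (hp1 : ∑ a, p a = 1) (hq1 : ∑ a, q a = 1) (hpq : ∀ a, 0 < p a → 0 < q a) :
    ∑ a, (√(p a) - √(q a)) ^ 2 ≤ klDiv p q := by
  have hkl : klDiv p q = ∑ a, ((if p a = 0 then 0 else p a * log (p a / q a)) - p a + q a) := by
    simp [klDiv, sum_add_distrib, sum_sub_distrib, hp1, hq1]
  rw [hkl]
  refine sum_le_sum fun a _ => ?_
  by_cases h : p a = 0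
  · simp [h, sq_sqrt (hq0 a)]
  · have hpa : 0 < p a := (hp0 a).lt_of_ne' h
    rw [if_neg h]
    exact sq_sqrt_sub_sqrt_le_mul_log_div hpa (hpq a hpa)

theorem sum_abs_sub_le_two_mul_sqrt_klDiv (hp0 : ∀ a, 0 ≤ p a) (hq0 : ∀ a, 0 ≤ q a)
    (hp1 : ∑ a, p a = 1) (hq1 : ∑ a, q a = 1) (hpq : ∀ a, 0 < p a → 0 < q a) :
    ∑ a, |p a - q a| ≤ 2 * √(klDiv p q) := by
  have hfactor : ∀ a, |p a - q a| = |√(p a) - √(q a)| * (√(p a) + √(q a)) := by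
    intro a
    have hdiff : p a - q a = (√(p a) - √(q a)) * (√(p a) + √(q a)) := by
      rw [mul_comm, ← sq_sub_sq, sq_sqrt (hp0 a), sq_sqrt (hq0 a)]
    rw [hdiff, abs_mul, abs_of_nonneg (by positivity : 0 ≤ √(p a) + √(q a))]
  have hsum : ∑ a, (√(p a) + √(q a)) ^ 2 ≤ 4 := by
    calc ∑ a, (√(p a) + √(q a)) ^ 2 ≤ ∑ a, 2 * (p a + q a) := by
          refine sum_le_sum fun a _ => ?_
          nlinarith [sq_nonneg (√(p a) - √(q a)), sq_sqrt (hp0 a), sq_sqrt (hq0 a)]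
      _ = 4 := by rw [← mul_sum, sum_add_distrib, hp1, hq1]; norm_num
  calc ∑ a, |p a - q a|
      = ∑ a, |√(p a) - √(q a)| * (√(p a) + √(q a)) := sum_congr rfl fun a _ => hfactor a
    _ ≤ √(∑ a, |√(p a) - √(q a)| ^ 2) * √(∑ a, (√(p a) + √(q a)) ^ 2) :=
        sum_mul_le_sqrt_mul_sqrt _ _ _
    _ ≤ √(klDiv p q) * √4 := by
        simp only [sq_abs]
        gcongr
        exact sum_sq_sqrt_sub_sqrt_le_klDiv hp0 hq0 hp1 hq1 hpq
    _ = 2 * √(klDiv p q) := by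
        rw [show (4 : ℝ) = 2 ^ 2 by norm_num, sqrt_sq zero_le_two, mul_comm]

end Divergence

section Product

variable {J : Type*} [Fintype J] [DecidableEq J] {A : J → Type*} [∀ j, Fintype (A j)]

theorem sum_prod_eq_one {p : ∀ j, A j → ℝ} (hp1 : ∀ j, ∑ a, p j a = 1) :
    ∑ b : ∀ j, A j, ∏ j, p j (b j) = 1 := by
  rw [← Fintype.prod_sum]; simp [hp1]

theorem sum_prod_mul_apply_eq_sum_mul {p : ∀ j, A j → ℝ} (hp1 : ∀ j, ∑ a, p j a = 1)
    (g : ∀ j, A j → ℝ) (j : J) :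
    ∑ b : ∀ k, A k, (∏ k, p k (b k)) * g j (b j) = ∑ a, p j a * g j a := by
  have hsplit : ∀ b : ∀ k, A k,
      (∏ k, p k (b k)) * g j (b j) = ∏ k, p k (b k) * (if k = j then g k (b k) else 1) := by
    intro b
    rw [prod_mul_distrib, prod_ite_eq' univ j, if_pos (mem_univ j)]
  rw [sum_congr rfl fun b _ => hsplit b,
    ← Fintype.prod_sum fun k a => p k a * if k = j then g k a else 1,
    prod_eq_single j (fun k _ hk => by simp [hk, hp1 k]) (by simp)]
  simp

theorem klDiv_pi {p q : ∀ j, A j → ℝ} (hp0 : ∀ j a, 0 ≤ p j a) (hp1 : ∀ j, ∑ a, p j a = 1)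
    (hpq : ∀ j a, 0 < p j a → 0 < q j a) :
    klDiv (fun b : ∀ j, A j => ∏ j, p j (b j)) (fun b => ∏ j, q j (b j))
      = ∑ j, klDiv (p j) (q j) := by
  set L : ∀ j, A j → ℝ := fun j a => if p j a = 0 then 0 else log (p j a / q j a)
  have hterm : ∀ b : ∀ j, A j,
      (if ∏ j, p j (b j) = 0 then 0
        else (∏ j, p j (b j)) * log ((∏ j, p j (b j)) / ∏ j, q j (b j)))
      = ∑ j, (∏ k, p k (b k)) * L j (b j) := by
    intro b
    rw [← mul_sum]
    by_cases hb : ∏ j, p j (b j) = 0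
    · simp [hb]
    have hpb : ∀ j, 0 < p j (b j) := fun j =>
      (hp0 j _).lt_of_ne' (prod_ne_zero_iff.mp hb j (mem_univ j))
    have hqb : ∀ j, 0 < q j (b j) := fun j => hpq j _ (hpb j)
    rw [if_neg hb, log_div hb (prod_pos fun j _ => hqb j).ne', log_prod fun j _ => (hpb j).ne',
      log_prod fun j _ => (hqb j).ne', ← sum_sub_distrib]
    congr 1
    refine sum_congr rfl fun j _ => ?_
    simp [L, (hpb j).ne', log_div (hpb j).ne' (hqb j).ne']
  simp_rw [klDiv, hterm]
  rw [sum_comm]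
  refine sum_congr rfl fun j _ => ?_
  rw [sum_prod_mul_apply_eq_sum_mul hp1 L j]
  refine sum_congr rfl fun a _ => ?_
  by_cases h : p j a = 0 <;> simp [L, h]

theorem sum_abs_prod_sub_prod_le {p q : ∀ j, A j → ℝ} (hp0 : ∀ j a, 0 ≤ p j a)
    (hq0 : ∀ j a, 0 ≤ q j a) (hp1 : ∀ j, ∑ a, p j a = 1) (hq1 : ∀ j, ∑ a, q j a = 1)
    (hpq : ∀ j a, 0 < p j a → 0 < q j a) :
    ∑ b : ∀ j, A j, |∏ j, p j (b j) - ∏ j, q j (b j)| ≤ 2 * √(∑ j, klDiv (p j) (q j)) := by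
  rw [← klDiv_pi hp0 hp1 hpq]
  refine sum_abs_sub_le_two_mul_sqrt_klDiv (fun b => prod_nonneg fun j _ => hp0 j (b j))
    (fun b => prod_nonneg fun j _ => hq0 j (b j)) (sum_prod_eq_one hp1) (sum_prod_eq_one hq1)
    fun b hb => prod_pos fun j _ => hpq j _ ?_
  exact (hp0 j _).lt_of_ne' (prod_ne_zero_iff.mp hb.ne' j (mem_univ j))

end Product

theorem abs_sum_mul_le_sum_abs_mul {ι : Type*} (s : Finset ι) (w : ι → ℝ) {x : ι → ℝ} {C : ℝ}
    (hx : ∀ i ∈ s, |x i| ≤ C) : |∑ i ∈ s, w i * x i| ≤ (∑ i ∈ s, |w i|) * C := by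
  calc |∑ i ∈ s, w i * x i| ≤ ∑ i ∈ s, |w i| * |x i| := by
        simpa only [abs_mul] using abs_sum_le_sum_abs (fun i => w i * x i) s
    _ ≤ ∑ i ∈ s, |w i| * C := sum_le_sum fun i hi => by gcongr; exact hx i hi
    _ = (∑ i ∈ s, |w i|) * C := (sum_mul ..).symm

theorem surrogate_gap_bound_general
    {S Ai : Type*} [Fintype S] [Fintype Ai]
    {J : Type*} [Fintype J] [DecidableEq J] (A : J → Type*) [∀ j, Fintype (A j)]
    (γ M : ℝ) (hγ1 : γ < 1) (hM0 : 0 ≤ M)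
    -- discounted state distribution of the old joint policy
    (ρ : S → ℝ) (hρ0 : ∀ s, 0 ≤ ρ s) (hρ1 : ∑ s, ρ s = 1 / (1 - γ))
    -- advantage of the old joint policy, with M = max |A_old|
    (Adv : S → Ai → (∀ j, A j) → ℝ) (hAdv : ∀ s ai b, |Adv s ai b| ≤ M)
    -- agent i's new policy
    (πinew : S → Ai → ℝ) (hi0 : ∀ s ai, 0 ≤ πinew s ai) (hi1 : ∀ s, ∑ ai, πinew s ai = 1)
    -- the other agents' old and new policies
    (pold pnew : ∀ j, S → A j → ℝ)
    (hpo0 : ∀ j s a, 0 ≤ pold j s a) (hpo1 : ∀ j s, ∑ a, pold j s a = 1)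
    (hpn0 : ∀ j s a, 0 ≤ pnew j s a) (hpn1 : ∀ j s, ∑ a, pnew j s a = 1)
    (hpos : ∀ j s a, 0 < pold j s a → 0 < pnew j s a) :
    |(∑ s, ρ s * ∑ ai, ∑ b : ∀ j, A j, (πinew s ai * ∏ j, pnew j s (b j)) * Adv s ai b)
        - ∑ s, ρ s * ∑ ai, πinew s ai * ∑ b : ∀ j, A j, (∏ j, pold j s (b j)) * Adv s ai b|
      ≤ (2 * M / (1 - γ)) * Real.sqrt (∑ j, ⨆ s : S, klDiv (pold j s) (pnew j s)) := by
  have hkl : ∀ s, ∑ j, klDiv (pold j s) (pnew j s) ≤ ∑ j, ⨆ s : S, klDiv (pold j s) (pnew j s) :=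
    fun s => sum_le_sum fun j _ =>
      le_ciSup (Set.finite_range fun s => klDiv (pold j s) (pnew j s)).bddAbove s
  set K := ∑ j, ⨆ s : S, klDiv (pold j s) (pnew j s)
  have htv : ∀ s, ∑ b : ∀ j, A j, |∏ j, pnew j s (b j) - ∏ j, pold j s (b j)| ≤ 2 * √K := by
    intro s
    simp_rw [abs_sub_comm (∏ j, pnew j s _)]
    exact (sum_abs_prod_sub_prod_le (fun j => hpo0 j s) (fun j => hpn0 j s) (fun j => hpo1 j s)
      (fun j => hpn1 j s) (fun j => hpos j s)).trans (by gcongr; exact hkl s)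
  have hstate : ∀ s, |∑ ai, πinew s ai *
      ∑ b : ∀ j, A j, (∏ j, pnew j s (b j) - ∏ j, pold j s (b j)) * Adv s ai b| ≤ 2 * √K * M := by
    intro s
    refine (abs_sum_mul_le_sum_abs_mul _ _ fun ai _ =>
      (abs_sum_mul_le_sum_abs_mul _ _ fun b _ => hAdv s ai b).trans
        (mul_le_mul_of_nonneg_right (htv s) hM0)).trans_eq ?_
    simp [abs_of_nonneg (hi0 s _), hi1 s]
  have hdiff : (∑ s, ρ s * ∑ ai, ∑ b : ∀ j, A j, (πinew s ai * ∏ j, pnew j s (b j)) * Adv s ai b)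
      - ∑ s, ρ s * ∑ ai, πinew s ai * ∑ b : ∀ j, A j, (∏ j, pold j s (b j)) * Adv s ai b
      = ∑ s, ρ s * ∑ ai, πinew s ai *
          ∑ b : ∀ j, A j, (∏ j, pnew j s (b j) - ∏ j, pold j s (b j)) * Adv s ai b := by
    simp only [← sum_sub_distrib, ← mul_sub, mul_sum, sub_mul, mul_assoc]
  rw [hdiff]
  refine (abs_sum_mul_le_sum_abs_mul _ _ fun s _ => hstate s).trans_eq ?_
  simp only [abs_of_nonneg (hρ0 _), hρ1]
  field_simp [(sub_pos.2 hγ1).ne']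

/-- bound on the gap between the joint and individual surrogate objectives.
Agent `i` has action space `Ai`; the other agents are indexed by `J` with action spaces `A j`. -/
theorem surrogate_gap_bound
    {S Ai : Type*} [Fintype S] [Nonempty S] [Fintype Ai]
    {J : Type*} [Fintype J] [DecidableEq J] (A : J → Type*) [∀ j, Fintype (A j)]
    (γ M : ℝ) (hγ0 : 0 ≤ γ) (hγ1 : γ < 1) (hM0 : 0 ≤ M)
    -- discounted state distribution of the old joint policy
    (ρ : S → ℝ) (hρ0 : ∀ s, 0 ≤ ρ s) (hρ1 : ∑ s, ρ s = 1 / (1 - γ))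
    -- advantage of the old joint policy, with M = max |A_old|
    (Adv : S → Ai → (∀ j, A j) → ℝ) (hAdv : ∀ s ai b, |Adv s ai b| ≤ M)
    -- agent i's new policy
    (πinew : S → Ai → ℝ) (hi0 : ∀ s ai, 0 ≤ πinew s ai) (hi1 : ∀ s, ∑ ai, πinew s ai = 1)
    -- the other agents' old and new policies
    (pold pnew : ∀ j, S → A j → ℝ)
    (hpo0 : ∀ j s a, 0 ≤ pold j s a) (hpo1 : ∀ j s, ∑ a, pold j s a = 1)
    (hpn0 : ∀ j s a, 0 ≤ pnew j s a) (hpn1 : ∀ j s, ∑ a, pnew j s a = 1)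
    (hpos : ∀ j s a, 0 < pold j s a → 0 < pnew j s a) :
    |(∑ s, ρ s * ∑ ai, ∑ b : ∀ j, A j, (πinew s ai * ∏ j, pnew j s (b j)) * Adv s ai b)
        - ∑ s, ρ s * ∑ ai, πinew s ai * ∑ b : ∀ j, A j, (∏ j, pold j s (b j)) * Adv s ai b|
      ≤ (2 * M / (1 - γ)) * Real.sqrt (∑ j, ⨆ s : S, klDiv (pold j s) (pnew j s)) :=
  surrogate_gap_bound_general A γ M hγ1 hM0 ρ hρ0 hρ1 Adv hAdv πinew hi0 hi1 pold pnew hpo0 hpo1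
    hpn0 hpn1 hpos
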